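/- arXiv:1807.00579 — 13 statements merged into one kernel-verified Lean document; each statement's English description precedes it below -/
import Mathlib

section
/- Let H and K be Hilbert spaces and A, C : H →L[ℂ] K bounded linear operators. If range C ⊆ range A, then there exists a bounded linear operator X : H →L[ℂ] H with A ∘L X = C. -/
/-!
On a closed complement `N` of `ker A` (in a Hilbert space, `(ker A)ᗮ`) the operator `A` is injective
with the same range as `A`, so every `C x` has a unique preimage in `N`; this gives a linear `X`
with `A X = C` and values in `N`. Its graph `{(x, y) | y ∈ N, A y = C x}` is closed, so `X` is
bounded by the closed graph theorem.
-/

open LinearMap ContinuousLinearMap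

section
variable {R E F G : Type*} [Ring R] [AddCommGroup E] [Module R E] [AddCommGroup F] [Module R F]
  [AddCommGroup G] [Module R G]

theorem LinearMap.apply_projection_of_isCompl_ker (A : E →ₗ[R] F) {N : Submodule R E}
    (hN : IsCompl N (ker A)) (x : E) : A (N.projection (ker A) hN x) = A x := by
  have := N.sub_projection_mem hN x
  rw [mem_ker, map_sub, sub_eq_zero] at this
  exact this.symm

theorem LinearMap.exists_comp_eq_of_range_le (A : E →ₗ[R] F) (C : G →ₗ[R] F)
    {N : Submodule R E} (hN : IsCompl N (ker A)) (h : range C ≤ range A) :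
    ∃ g : G →ₗ[R] E, A ∘ₗ g = C ∧ range g ≤ N := by
  -- `N ≃ E ⧸ ker A ≃ range A`
  let e : range A ≃ₗ[R] N :=
    A.quotKerEquivRange.symm ≪≫ₗ (ker A).quotientEquivOfIsCompl N hN.symm
  have hAe : ∀ z, A (e z) = z := by
    rintro ⟨_, hx⟩
    obtain ⟨x, rfl⟩ := mem_range.mp hx
    rw [LinearEquiv.trans_apply, quotKerEquivRange_symm_apply_image, Submodule.mkQ_apply,
      Submodule.quotientEquivOfIsCompl_apply_mk, Submodule.coe_projectionOnto_apply,
      apply_projection_of_isCompl_ker]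
  refine ⟨N.subtype ∘ₗ e.toLinearMap ∘ₗ C.codRestrict (range A) fun x => h (mem_range_self C x),
    ?_, ?_⟩
  · ext x
    exact hAe _
  · rintro _ ⟨x, rfl⟩
    exact (e _).2

end

section
variable {𝕜 E F G : Type*} [NontriviallyNormedField 𝕜]
  [NormedAddCommGroup E] [NormedSpace 𝕜 E] [CompleteSpace E]
  [AddCommGroup F] [Module 𝕜 F] [TopologicalSpace F] [T2Space F]
  [NormedAddCommGroup G] [NormedSpace 𝕜 G] [CompleteSpace G]

theorem LinearMap.continuous_of_continuous_comp_of_range_le (g : G →ₗ[𝕜] E) (A : E →L[𝕜] F)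
    {N : Submodule 𝕜 E} (hNc : IsClosed (N : Set E)) (hN : Disjoint N (ker (A : E →ₗ[𝕜] F)))
    (hg : range g ≤ N) (hAg : Continuous (A ∘ g)) : Continuous g := by
  have hgraph : (g.graph : Set (G × E)) = {p | p.2 ∈ N ∧ A p.2 = A (g p.1)} := by
    ext ⟨x, y⟩
    refine ⟨?_, fun ⟨hy, hAy⟩ => ?_⟩
    · rintro (rfl : y = g x)
      exact ⟨hg (mem_range_self g x), rfl⟩
    · have hmem : y - g x ∈ N ⊓ ker (A : E →ₗ[𝕜] F) :=
        ⟨N.sub_mem hy (hg (mem_range_self g x)), by simp [hAy]⟩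
      rw [hN.eq_bot, Submodule.mem_bot, sub_eq_zero] at hmem
      exact hmem
  refine g.continuous_of_isClosed_graph ?_
  rw [hgraph]
  exact (hNc.preimage continuous_snd).inter
    (isClosed_eq (A.continuous.comp continuous_snd) (hAg.comp continuous_fst))

theorem ContinuousLinearMap.exists_comp_eq_of_range_le (A : E →L[𝕜] F) (C : G →L[𝕜] F)
    {N : Submodule 𝕜 E} (hNc : IsClosed (N : Set E)) (hN : IsCompl N (ker (A : E →ₗ[𝕜] F)))
    (h : range (C : G →ₗ[𝕜] F) ≤ range (A : E →ₗ[𝕜] F)) :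
    ∃ X : G →L[𝕜] E, A ∘L X = C := by
  obtain ⟨g, hAg, hgN⟩ := (A : E →ₗ[𝕜] F).exists_comp_eq_of_range_le (C : G →ₗ[𝕜] F) hN h
  have hg : Continuous g := g.continuous_of_continuous_comp_of_range_le A hNc hN.disjoint hgN
    (by rw [← coe_coe A, ← LinearMap.coe_comp, hAg]; exact C.continuous)
  exact ⟨⟨g, hg⟩, ContinuousLinearMap.coe_injective hAg⟩

end

theorem douglas_range_to_factor_general
    {H K : Type*} [NormedAddCommGroup H] [InnerProductSpace ℂ H] [CompleteSpace H]
    [NormedAddCommGroup K] [InnerProductSpace ℂ K]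
    (A C : H →L[ℂ] K)
    (h : (LinearMap.range (C : H →ₗ[ℂ] K) : Set K) ⊆ (LinearMap.range (A : H →ₗ[ℂ] K) : Set K)) :
    ∃ X : H →L[ℂ] H, A ∘L X = C :=
  A.exists_comp_eq_of_range_le C (ker (A : H →ₗ[ℂ] K)).isClosed_orthogonal
    (ker (A : H →ₗ[ℂ] K)).isCompl_orthogonal.symm h

theorem douglas_range_to_factor
    {H K : Type*} [NormedAddCommGroup H] [InnerProductSpace ℂ H] [CompleteSpace H]
    [NormedAddCommGroup K] [InnerProductSpace ℂ K] [CompleteSpace K]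
    (A C : H →L[ℂ] K)
    (h : (LinearMap.range (C : H →ₗ[ℂ] K) : Set K) ⊆ (LinearMap.range (A : H →ₗ[ℂ] K) : Set K)) :
    ∃ X : H →L[ℂ] H, A ∘L X = C :=
  douglas_range_to_factor_general A C h
end

section
/- Let H, K be Hilbert spaces and A, C : H →L[ℂ] K. If there exists X : H →L[ℂ] H with A ∘L X = C, then there exists k ≥ 0 such that C ∘L C* ≤ k^2 • (A ∘L A*) in the Loewner order on self-adjoint operators on K. -/
/-!
If `A X = C` then `C† = X† A†`, so `‖C† y‖ ≤ ‖X‖ ‖A† y‖` for every `y`. Since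
`re ⟪(k² A A† - C C†) y, y⟫ = k² ‖A† y‖² - ‖C† y‖²`, the operator `k² A A† - C C†` is positive
for `k = ‖X‖`.
-/

open ContinuousLinearMap

section Majorization

variable {𝕜 E F G : Type*} [RCLike 𝕜] [NormedAddCommGroup E] [InnerProductSpace 𝕜 E]
  [CompleteSpace E] [NormedAddCommGroup F] [InnerProductSpace 𝕜 F] [CompleteSpace F]
  [NormedAddCommGroup G] [InnerProductSpace 𝕜 G] [CompleteSpace G]

theorem ContinuousLinearMap.reApplyInnerSelf_self_comp_adjoint (S : E →L[𝕜] F) (y : F) :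
    (S ∘L adjoint S).reApplyInnerSelf y = ‖adjoint S y‖ ^ 2 := by
  rw [apply_norm_sq_eq_inner_adjoint_left, adjoint_adjoint]
  rfl

theorem ContinuousLinearMap.norm_adjoint_apply_le_of_comp_eq {A : E →L[𝕜] F} {X : G →L[𝕜] E}
    {C : G →L[𝕜] F} (hX : A ∘L X = C) (y : F) : ‖adjoint C y‖ ≤ ‖X‖ * ‖adjoint A y‖ := by
  rw [← hX, adjoint_comp, comp_apply, ← LinearIsometryEquiv.norm_map adjoint X]
  exact (adjoint X).le_opNorm _

theorem ContinuousLinearMap.isPositive_sub_self_comp_adjoint_of_norm_adjoint_le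
    {A C : E →L[𝕜] F} {k : ℝ} (h : ∀ y, ‖adjoint C y‖ ≤ k * ‖adjoint A y‖) :
    (((k ^ 2 : ℝ) : 𝕜) • (A ∘L adjoint A) - C ∘L adjoint C).IsPositive := by
  refine isPositive_def'.mpr ⟨?_, fun y => ?_⟩
  · exact (IsSelfAdjoint.smul (RCLike.conj_ofReal _)
      (isPositive_self_comp_adjoint A).isSelfAdjoint).sub
      (isPositive_self_comp_adjoint C).isSelfAdjoint
  · have hsplit : (((k ^ 2 : ℝ) : 𝕜) • (A ∘L adjoint A) - C ∘L adjoint C).reApplyInnerSelf y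
        = k ^ 2 * (A ∘L adjoint A).reApplyInnerSelf y - (C ∘L adjoint C).reApplyInnerSelf y := by
      simp only [reApplyInnerSelf, sub_apply, smul_apply, inner_sub_left, map_sub,
        inner_smul_real_left, RCLike.smul_re]
    rw [hsplit, reApplyInnerSelf_self_comp_adjoint, reApplyInnerSelf_self_comp_adjoint,
      sub_nonneg, ← mul_pow]
    exact pow_le_pow_left₀ (norm_nonneg _) (h y) 2

end Majorization

theorem douglas_factor_to_majorize
    {H K : Type*} [NormedAddCommGroup H] [InnerProductSpace ℂ H] [CompleteSpace H]
    [NormedAddCommGroup K] [InnerProductSpace ℂ K] [CompleteSpace K]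
    (A C : H →L[ℂ] K)
    (h : ∃ X : H →L[ℂ] H, A ∘L X = C) :
    ∃ k : ℝ, 0 ≤ k ∧ ((k ^ 2) • (A ∘L adjoint A) - C ∘L adjoint C).IsPositive := by
  obtain ⟨X, hX⟩ := h
  refine ⟨‖X‖, norm_nonneg X, ?_⟩
  rw [RCLike.real_smul_eq_coe_smul (K := ℂ)]
  exact isPositive_sub_self_comp_adjoint_of_norm_adjoint_le (norm_adjoint_apply_le_of_comp_eq hX)
end

section
/- Let H, K be Hilbert spaces and A, C : H →L[ℂ] K. If C ∘L C* ≤ k^2 • (A ∘L A*) for some k ≥ 0, then range C ⊆ range A. -/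
/-!
The Loewner inequality gives `‖C† z‖ ≤ |k| ‖A† z‖`. For `y = C x`, the functional
`z ↦ ⟪y, z⟫ = ⟪x, C† z⟫` is then bounded by `‖x‖ |k| ‖A† z‖`, so it factors through `A†` via a
bounded functional on `range A†`. Hahn–Banach extends that functional to `H` and Riesz represents
it as `⟪w, ·⟫`; then `⟪A w, z⟫ = ⟪w, A† z⟫ = ⟪y, z⟫` for all `z`, i.e. `y = A w`.
-/

open ContinuousLinearMap
open scoped InnerProductSpace

theorem exists_strongDual_apply_eq_of_norm_le {𝕜 V E : Type*} [RCLike 𝕜] [AddCommGroup V]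
    [Module 𝕜 V] [SeminormedAddCommGroup E] [NormedSpace 𝕜 E] (T : V →ₗ[𝕜] E)
    (g : V →ₗ[𝕜] 𝕜) (c : ℝ) (hg : ∀ v, ‖g v‖ ≤ c * ‖T v‖) :
    ∃ G : StrongDual 𝕜 E, ∀ v, G (T v) = g v := by
  have hker : LinearMap.ker T ≤ LinearMap.ker g := fun v hv ↦ by
    simpa [LinearMap.mem_ker.mp hv] using hg v
  let f : LinearMap.range T →ₗ[𝕜] 𝕜 := (LinearMap.ker T).liftQ g hker ∘ₗ T.quotKerEquivRange.symm
  have hf : ∀ v, f ⟨T v, LinearMap.mem_range_self T v⟩ = g v := by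
    simp [f, LinearMap.quotKerEquivRange_symm_apply_image]
  obtain ⟨G, hG, -⟩ := exists_extension_norm_eq (LinearMap.range T) <| f.mkContinuous c <| by
    rintro ⟨_, v, rfl⟩
    simpa [hf] using hg v
  exact ⟨G, fun v ↦ (hG ⟨T v, LinearMap.mem_range_self T v⟩).trans (hf v)⟩

theorem range_le_range_of_norm_adjoint_apply_le {𝕜 H K : Type*} [RCLike 𝕜]
    [NormedAddCommGroup H] [InnerProductSpace 𝕜 H] [CompleteSpace H]
    [NormedAddCommGroup K] [InnerProductSpace 𝕜 K] [CompleteSpace K]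
    {A C : H →L[𝕜] K} {c : ℝ} (hc : ∀ z, ‖adjoint C z‖ ≤ c * ‖adjoint A z‖) :
    LinearMap.range (C : H →ₗ[𝕜] K) ≤ LinearMap.range (A : H →ₗ[𝕜] K) := by
  rintro _ ⟨x, rfl⟩
  obtain ⟨G, hG⟩ := exists_strongDual_apply_eq_of_norm_le (adjoint A : K →ₗ[𝕜] H)
    (innerₛₗ 𝕜 (C x)) (‖x‖ * c) fun z ↦ by
      calc ‖⟪C x, z⟫_𝕜‖ = ‖⟪x, adjoint C z⟫_𝕜‖ := by rw [adjoint_inner_right]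
        _ ≤ ‖x‖ * (c * ‖adjoint A z‖) := (norm_inner_le_norm _ _).trans (by gcongr; exact hc z)
        _ = ‖x‖ * c * ‖adjoint A z‖ := (mul_assoc ..).symm
  refine ⟨(InnerProductSpace.toDual 𝕜 H).symm G, ext_inner_right 𝕜 fun z ↦ ?_⟩
  simp only [ContinuousLinearMap.coe_coe, innerₛₗ_apply_apply] at hG ⊢
  rw [← adjoint_inner_right, InnerProductSpace.toDual_symm_apply, hG z]

theorem norm_adjoint_apply_le_of_isPositive {H K : Type*}
    [NormedAddCommGroup H] [InnerProductSpace ℂ H] [CompleteSpace H]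
    [NormedAddCommGroup K] [InnerProductSpace ℂ K] [CompleteSpace K]
    {A C : H →L[ℂ] K} {k : ℝ} (h : ((k ^ 2) • (A ∘L adjoint A) - C ∘L adjoint C).IsPositive)
    (z : K) : ‖adjoint C z‖ ≤ |k| * ‖adjoint A z‖ := by
  have hsq : ‖adjoint C z‖ ^ 2 ≤ (|k| * ‖adjoint A z‖) ^ 2 := by
    rw [mul_pow, sq_abs, apply_norm_sq_eq_inner_adjoint_right,
      apply_norm_sq_eq_inner_adjoint_right, adjoint_adjoint, adjoint_adjoint]
    simpa [inner_sub_right, inner_smul_right_eq_smul, -Complex.ofReal_pow, ← Complex.ofReal_pow]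
      using h.re_inner_nonneg_right z
  exact (pow_le_pow_iff_left₀ (norm_nonneg _) (by positivity) two_ne_zero).mp hsq

theorem douglas_majorize_to_range_general
    {H K : Type*} [NormedAddCommGroup H] [InnerProductSpace ℂ H] [CompleteSpace H]
    [NormedAddCommGroup K] [InnerProductSpace ℂ K] [CompleteSpace K]
    (A C : H →L[ℂ] K) (k : ℝ)
    (h : ((k ^ 2) • (A ∘L adjoint A) - C ∘L adjoint C).IsPositive) :
    (LinearMap.range (C : H →ₗ[ℂ] K) : Set K) ⊆ (LinearMap.range (A : H →ₗ[ℂ] K) : Set K) :=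
  SetLike.coe_subset_coe.mpr <|
    range_le_range_of_norm_adjoint_apply_le (norm_adjoint_apply_le_of_isPositive h)

theorem douglas_majorize_to_range
    {H K : Type*} [NormedAddCommGroup H] [InnerProductSpace ℂ H] [CompleteSpace H]
    [NormedAddCommGroup K] [InnerProductSpace ℂ K] [CompleteSpace K]
    (A C : H →L[ℂ] K) (k : ℝ) (hk : 0 ≤ k)
    (h : ((k ^ 2) • (A ∘L adjoint A) - C ∘L adjoint C).IsPositive) :
    (LinearMap.range (C : H →ₗ[ℂ] K) : Set K) ⊆ (LinearMap.range (A : H →ₗ[ℂ] K) : Set K) :=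
  douglas_majorize_to_range_general A C k h
end

section
/- Let H, K be Hilbert spaces and A, C : H →L[ℂ] K with range C ⊆ range A. Then there exists a unique X : H →L[ℂ] H such that A ∘L X = C, ker X = ker C, and range X ⊆ closure (range A*). -/
/-!
On `N = (ker A)ᗮ = closure (range A*)` the operator `A` is injective, and `A N = range A` because
`A` kills the `ker A` component of every vector. Hence each `C y` has a unique preimage `X y` in `N`;
`X` is linear by uniqueness and bounded by the closed graph theorem, since its graph is
`{(y, x) | x ∈ N, A x = C y}`. Injectivity of `A` on `N` also gives `ker X = ker C` and uniqueness.
-/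

open ContinuousLinearMap

section Factorization

variable {𝕜 E F G : Type*} [NontriviallyNormedField 𝕜]
  [NormedAddCommGroup E] [NormedSpace 𝕜 E] [NormedAddCommGroup F] [NormedSpace 𝕜 F]
  [NormedAddCommGroup G] [NormedSpace 𝕜 G]

theorem ContinuousLinearMap.exists_comp_eq_of_injOn [CompleteSpace E] [CompleteSpace F]
    {A : F →L[𝕜] G} {C : E →L[𝕜] G} {S : Submodule 𝕜 F} (hS : IsClosed (S : Set F))
    (hA : Set.InjOn A S) (hC : ∀ y, ∃ x ∈ S, A x = C y) :
    ∃ X : E →L[𝕜] F, A ∘L X = C ∧ ∀ y, X y ∈ S := by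
  choose g hgS hgA using hC
  have hg : ∀ y x, x ∈ S → A x = C y → g y = x := fun y x hx hAx ↦
    hA (hgS y) hx (by rw [hgA, hAx])
  let X : E →ₗ[𝕜] F :=
    { toFun := g
      map_add' := fun y z ↦ hg _ _ (S.add_mem (hgS y) (hgS z)) (by simp [hgA])
      map_smul' := fun c y ↦ hg _ _ (S.smul_mem c (hgS y)) (by simp [hgA]) }
  have hgraph : (X.graph : Set (E × F)) = {p | p.2 ∈ S} ∩ {p | A p.2 = C p.1} := by
    ext ⟨y, x⟩
    simp only [SetLike.mem_coe, LinearMap.mem_graph_iff]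
    exact ⟨by rintro rfl; exact ⟨hgS y, hgA y⟩, fun hp ↦ (hg y x hp.1 hp.2).symm⟩
  have hclosed : IsClosed (X.graph : Set (E × F)) :=
    hgraph ▸ (hS.preimage continuous_snd).inter (isClosed_eq (by fun_prop) (by fun_prop))
  exact ⟨ofIsClosedGraph hclosed, ext hgA, hgS⟩

theorem ContinuousLinearMap.ker_eq_ker_of_comp_eq_of_injOn {A : F →L[𝕜] G} {X : E →L[𝕜] F}
    {C : E →L[𝕜] G} {S : Submodule 𝕜 F} (hA : Set.InjOn A S) (hX : ∀ y, X y ∈ S)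
    (hAX : A ∘L X = C) : LinearMap.ker (X : E →ₗ[𝕜] F) = LinearMap.ker (C : E →ₗ[𝕜] G) := by
  ext y
  simp only [LinearMap.mem_ker, coe_coe, ← hAX, comp_apply]
  exact ⟨fun hy ↦ by rw [hy, map_zero], fun hy ↦ hA (hX y) S.zero_mem (by rw [hy, map_zero])⟩

end Factorization

section InnerProductSpace

variable {𝕜 E F : Type*} [RCLike 𝕜]
  [NormedAddCommGroup E] [InnerProductSpace 𝕜 E] [NormedAddCommGroup F] [InnerProductSpace 𝕜 F]

theorem ContinuousLinearMap.injOn_orthogonal_ker (A : E →L[𝕜] F) : Set.InjOn A A.kerᗮ := by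
  intro x hx z hz hxz
  have hmem : x - z ∈ A.ker ⊓ A.kerᗮ := ⟨by simp [hxz], A.kerᗮ.sub_mem hx hz⟩
  rw [Submodule.inf_orthogonal_eq_bot, Submodule.mem_bot] at hmem
  exact sub_eq_zero.mp hmem

theorem ContinuousLinearMap.exists_mem_orthogonal_ker_apply_eq [CompleteSpace E] (A : E →L[𝕜] F)
    (x : E) : ∃ x' ∈ A.kerᗮ, A x' = A x := by
  have : CompleteSpace A.ker := A.isClosed_ker.completeSpace_coe
  obtain ⟨y, hy, z, hz, rfl⟩ := A.ker.exists_add_mem_mem_orthogonal x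
  have hAy : A y = 0 := hy
  exact ⟨z, hz, by rw [map_add, hAy, zero_add]⟩

end InnerProductSpace

theorem douglas_reduced_solution_exists_unique
    {H K : Type*} [NormedAddCommGroup H] [InnerProductSpace ℂ H] [CompleteSpace H]
    [NormedAddCommGroup K] [InnerProductSpace ℂ K] [CompleteSpace K]
    (A C : H →L[ℂ] K)
    (h : (LinearMap.range (C : H →ₗ[ℂ] K) : Set K) ⊆ (LinearMap.range (A : H →ₗ[ℂ] K) : Set K)) :
    ∃! X : H →L[ℂ] H, A ∘L X = C ∧ LinearMap.ker (X : H →ₗ[ℂ] H) = LinearMap.ker (C : H →ₗ[ℂ] K) ∧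
      (LinearMap.range (X : H →ₗ[ℂ] H) : Set H) ⊆ closure (LinearMap.range (adjoint A : K →ₗ[ℂ] H) : Set H) := by
  have hN : closure (LinearMap.range (adjoint A : K →ₗ[ℂ] H) : Set H) = A.kerᗮ := by
    rw [A.orthogonal_ker, Submodule.topologicalClosure_coe]
  have hC (y : H) : ∃ x ∈ A.kerᗮ, A x = C y := by
    obtain ⟨x, hx⟩ := h ⟨y, rfl⟩
    obtain ⟨x', hx'N, hx'⟩ := A.exists_mem_orthogonal_ker_apply_eq x
    exact ⟨x', hx'N, hx'.trans hx⟩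
  obtain ⟨X, hAX, hXN⟩ :=
    exists_comp_eq_of_injOn (Submodule.isClosed_orthogonal _) A.injOn_orthogonal_ker hC
  rw [hN]
  refine ⟨X, ⟨hAX, ker_eq_ker_of_comp_eq_of_injOn A.injOn_orthogonal_ker hXN hAX, ?_⟩, ?_⟩
  · rintro _ ⟨y, rfl⟩
    exact hXN y
  · rintro Y ⟨hAY, -, hYN⟩
    ext y
    exact A.injOn_orthogonal_ker (hYN ⟨y, rfl⟩) (hXN y)
      (DFunLike.congr_fun (hAY.trans hAX.symm) y)
end

section
/- Let H, K be Hilbert spaces and A, C : H →L[ℂ] K. The inequality C ∘L C* ≤ λ • (A ∘L A*) holds for some λ > 0 if and only if there exists μ > 0 such that ‖C* z‖ ≤ μ • ‖A* z‖ for all z ∈ K. -/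
/-!
Since `λ AA* - CC*` is automatically self-adjoint, its positivity says exactly that
`⟪(λ AA* - CC*) z, z⟫ = λ ‖A* z‖² - ‖C* z‖² ≥ 0` for all `z`; the two constants are related by
`μ = √λ`.
-/

open ContinuousLinearMap

namespace ContinuousLinearMap

theorem reApplyInnerSelf_comp_adjoint {𝕜 E F : Type*} [RCLike 𝕜]
    [NormedAddCommGroup E] [InnerProductSpace 𝕜 E] [CompleteSpace E]
    [NormedAddCommGroup F] [InnerProductSpace 𝕜 F] [CompleteSpace F]
    (A : E →L[𝕜] F) (y : F) :
    (A ∘L adjoint A).reApplyInnerSelf y = ‖adjoint A y‖ ^ 2 := by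
  rw [reApplyInnerSelf_apply, apply_norm_sq_eq_inner_adjoint_left, adjoint_adjoint]

variable {E F : Type*} [NormedAddCommGroup E] [InnerProductSpace ℂ E]
  [NormedAddCommGroup F] [InnerProductSpace ℂ F]

theorem reApplyInnerSelf_real_smul_sub (S T : E →L[ℂ] E) (lam : ℝ) (x : E) :
    (lam • S - T).reApplyInnerSelf x = lam * S.reApplyInnerSelf x - T.reApplyInnerSelf x := by
  rw [reApplyInnerSelf_apply, sub_apply, inner_sub_left, map_sub, smul_apply,
    RCLike.real_smul_eq_coe_smul (K := ℂ), inner_smul_left, RCLike.conj_ofReal, RCLike.re_ofReal_mul]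
  rfl

theorem isPositive_real_smul_comp_adjoint_sub_comp_adjoint_iff [CompleteSpace E] [CompleteSpace F]
    (A C : E →L[ℂ] F) (lam : ℝ) :
    (lam • (A ∘L adjoint A) - C ∘L adjoint C).IsPositive ↔
      ∀ y, ‖adjoint C y‖ ^ 2 ≤ lam * ‖adjoint A y‖ ^ 2 := by
  have hsa : IsSelfAdjoint (lam • (A ∘L adjoint A) - C ∘L adjoint C) :=
    ((IsSelfAdjoint.all lam).smul (isPositive_self_comp_adjoint A).isSelfAdjoint).sub
      (isPositive_self_comp_adjoint C).isSelfAdjoint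
  simp only [isPositive_def', hsa, true_and, reApplyInnerSelf_real_smul_sub,
    reApplyInnerSelf_comp_adjoint, sub_nonneg]

end ContinuousLinearMap

theorem douglas_majorization_iff_norm
    {H K : Type*} [NormedAddCommGroup H] [InnerProductSpace ℂ H] [CompleteSpace H]
    [NormedAddCommGroup K] [InnerProductSpace ℂ K] [CompleteSpace K]
    (A C : H →L[ℂ] K) :
    (∃ lam : ℝ, 0 < lam ∧ (lam • (A ∘L adjoint A) - C ∘L adjoint C).IsPositive) ↔
      (∃ mu : ℝ, 0 < mu ∧ ∀ z : K, ‖adjoint C z‖ ≤ mu * ‖adjoint A z‖) := by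
  simp only [isPositive_real_smul_comp_adjoint_sub_comp_adjoint_iff]
  constructor
  · rintro ⟨lam, hlam, hle⟩
    refine ⟨√lam, Real.sqrt_pos.2 hlam, fun z => ?_⟩
    rw [← sq_le_sq₀ (norm_nonneg _) (by positivity), mul_pow, Real.sq_sqrt hlam.le]
    exact hle z
  · rintro ⟨mu, hmu, hle⟩
    refine ⟨mu ^ 2, by positivity, fun z => ?_⟩
    rw [← mul_pow]
    exact pow_le_pow_left₀ (norm_nonneg _) (hle z) 2
end

section
/- Let H, K be Hilbert spaces, A, C : H →L[ℂ] K with range C ⊆ range A. Let D be the reduced solution of A X = C (i.e., A D = C and range D ⊆ closure (range A*)), and let U be the partial isometry from the polar decomposition of A, with P = U* ∘L U. Then an operator X : H →L[ℂ] H satisfies A X = C if and only if X = D + (1 - P) ∘L Y for some Y : H →L[ℂ] H. -/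
/-!
Since `(ker A)ᗮ` is the closure of `range A†`, the projection `1 - U†U` is the orthogonal
projection onto `ker A`. Hence `A (X - D) = 0` says exactly that `X - D` is fixed by `1 - U†U`,
and conversely `A ∘L (1 - U†U) = 0`.
-/

open ContinuousLinearMap

section

variable {𝕜 E F G : Type*} [RCLike 𝕜]
  [NormedAddCommGroup E] [InnerProductSpace 𝕜 E] [CompleteSpace E]
  [NormedAddCommGroup F] [InnerProductSpace 𝕜 F]
  [NormedAddCommGroup G] [NormedSpace 𝕜 G]

theorem ContinuousLinearMap.one_sub_starProjection_closure_range_adjoint [CompleteSpace F]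
    (A : E →L[𝕜] F) :
    1 - (adjoint A).range.topologicalClosure.starProjection = A.ker.starProjection := by
  rw [← Submodule.starProjection_orthogonal']
  simp_rw [← orthogonal_ker, Submodule.orthogonal_orthogonal]

theorem ContinuousLinearMap.comp_starProjection_ker (A : E →L[𝕜] F) :
    A ∘L A.ker.starProjection = 0 := by
  ext x
  exact A.ker.starProjection_apply_mem x

theorem ContinuousLinearMap.starProjection_ker_comp_of_comp_eq_zero {A : E →L[𝕜] F}
    {Z : G →L[𝕜] E} (hZ : A ∘L Z = 0) : A.ker.starProjection ∘L Z = Z := by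
  ext x
  exact Submodule.starProjection_eq_self_iff.mpr (congr($hZ x))

theorem ContinuousLinearMap.comp_eq_iff_exists_eq_add_starProjection_ker_comp
    {A : E →L[𝕜] F} {C : G →L[𝕜] F} {D : G →L[𝕜] E} (hD : A ∘L D = C) (X : G →L[𝕜] E) :
    A ∘L X = C ↔ ∃ Y : G →L[𝕜] E, X = D + A.ker.starProjection ∘L Y := by
  constructor
  · intro hX
    have hXD : A ∘L (X - D) = 0 := by rw [comp_sub, hX, hD, sub_self]
    exact ⟨X - D, by rw [starProjection_ker_comp_of_comp_eq_zero hXD, add_sub_cancel]⟩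
  · rintro ⟨Y, rfl⟩
    rw [comp_add, hD, ← comp_assoc, comp_starProjection_ker, zero_comp, add_zero]

end

theorem general_solution_AX_eq_C_general
    {H K : Type*} [NormedAddCommGroup H] [InnerProductSpace ℂ H] [CompleteSpace H]
    [NormedAddCommGroup K] [InnerProductSpace ℂ K] [CompleteSpace K]
    (A C : H →L[ℂ] K) (D : H →L[ℂ] H) (U : H →L[ℂ] K)
    (hD1 : A ∘L D = C)
    (hU2 : adjoint U ∘L U =
      (LinearMap.range (adjoint A : K →ₗ[ℂ] H)).topologicalClosure.subtypeL ∘L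
        Submodule.orthogonalProjectionOnto (LinearMap.range (adjoint A : K →ₗ[ℂ] H)).topologicalClosure) :
    ∀ X : H →L[ℂ] H, A ∘L X = C ↔
      ∃ Y : H →L[ℂ] H, X = D + (1 - adjoint U ∘L U) ∘L Y := by
  have hP : 1 - adjoint U ∘L U = A.ker.starProjection := by
    rw [hU2]
    exact A.one_sub_starProjection_closure_range_adjoint
  rw [hP]
  exact comp_eq_iff_exists_eq_add_starProjection_ker_comp hD1

theorem general_solution_AX_eq_C
    {H K : Type*} [NormedAddCommGroup H] [InnerProductSpace ℂ H] [CompleteSpace H]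
    [NormedAddCommGroup K] [InnerProductSpace ℂ K] [CompleteSpace K]
    (A C : H →L[ℂ] K) (D : H →L[ℂ] H) (U : H →L[ℂ] K)
    (hrange : (LinearMap.range (C : H →ₗ[ℂ] K) : Set K) ⊆ (LinearMap.range (A : H →ₗ[ℂ] K) : Set K))
    (hD1 : A ∘L D = C)
    (hD2 : (LinearMap.range (D : H →ₗ[ℂ] H) : Set H) ⊆ closure (LinearMap.range (adjoint A : K →ₗ[ℂ] H) : Set H))
    (hU1 : A = U ∘L CFC.sqrt (adjoint A ∘L A))
    (hU2 : adjoint U ∘L U =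
      (LinearMap.range (adjoint A : K →ₗ[ℂ] H)).topologicalClosure.subtypeL ∘L
        Submodule.orthogonalProjectionOnto (LinearMap.range (adjoint A : K →ₗ[ℂ] H)).topologicalClosure) :
    ∀ X : H →L[ℂ] H, A ∘L X = C ↔
      ∃ Y : H →L[ℂ] H, X = D + (1 - adjoint U ∘L U) ∘L Y :=
  general_solution_AX_eq_C_general A C D U hD1 hU2
end

section
/- Let H, K be Hilbert spaces, A, C : H →L[ℂ] K with range C ⊆ range A, D the reduced solution of A X = C, and P the orthogonal projection onto closure(range A*). Then D ∘L P is self-adjoint if and only if C ∘L A* is self-adjoint. -/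
/-!
Write `M` for the closure of `range A*` and `P` for the orthogonal projection onto `M`.
Since `range D ⊆ M`, the operator `D P` is self-adjoint exactly when `D` is symmetric on `M`,
and by continuity this is the same as being symmetric on `range A*`. For `u = A* a`, `v = A* b`
we have `⟪D u, v⟫ = ⟪A D A* a, b⟫ = ⟪C A* a, b⟫`, so symmetry of `D` on `range A*` says
precisely that `C A*` is self-adjoint.
-/

open ContinuousLinearMap
open scoped InnerProductSpace

namespace ContinuousLinearMap

variable {𝕜 E F : Type*} [RCLike 𝕜] [NormedAddCommGroup E] [InnerProductSpace 𝕜 E]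
  [NormedAddCommGroup F] [InnerProductSpace 𝕜 F]

def IsSymmetricOn (T : E →L[𝕜] E) (S : Set E) : Prop :=
  ∀ u ∈ S, ∀ v ∈ S, ⟪T u, v⟫_𝕜 = ⟪u, T v⟫_𝕜

theorem isSymmetricOn_closure_iff {T : E →L[𝕜] E} {S : Set E} :
    IsSymmetricOn T (closure S) ↔ IsSymmetricOn T S := by
  refine ⟨fun h u hu v hv ↦ h u (subset_closure hu) v (subset_closure hv), fun h u hu v hv ↦ ?_⟩
  have hclosed : IsClosed {p : E × E | ⟪T p.1, p.2⟫_𝕜 = ⟪p.1, T p.2⟫_𝕜} :=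
    isClosed_eq (by fun_prop) (by fun_prop)
  have hS : S ×ˢ S ⊆ {p : E × E | ⟪T p.1, p.2⟫_𝕜 = ⟪p.1, T p.2⟫_𝕜} :=
    fun p ⟨hp₁, hp₂⟩ ↦ h p.1 hp₁ p.2 hp₂
  have huv : (u, v) ∈ closure (S ×ˢ S) := by
    rw [closure_prod_eq]
    exact ⟨hu, hv⟩
  exact closure_minimal hS hclosed huv

variable [CompleteSpace E]

theorem isSelfAdjoint_comp_starProjection_iff {T : E →L[𝕜] E} (U : Submodule 𝕜 E)
    [U.HasOrthogonalProjection] (hT : LinearMap.range (T : E →ₗ[𝕜] E) ≤ U) :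
    IsSelfAdjoint (T ∘L U.starProjection) ↔ IsSymmetricOn T U := by
  rw [isSelfAdjoint_iff_isSymmetric]
  constructor
  · intro h u hu v hv
    simpa only [coe_coe, coe_comp, Function.comp_apply,
      Submodule.starProjection_eq_self_iff.mpr hu, Submodule.starProjection_eq_self_iff.mpr hv]
      using h u v
  · intro h x y
    have hTU : ∀ z, T z ∈ U := fun z ↦ hT ⟨z, rfl⟩
    calc ⟪T (U.starProjection x), y⟫_𝕜 = ⟪T (U.starProjection x), U.starProjection y⟫_𝕜 := by
          rw [← U.inner_starProjection_left_eq_right,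
            Submodule.starProjection_eq_self_iff.mpr (hTU _)]
      _ = ⟪U.starProjection x, T (U.starProjection y)⟫_𝕜 :=
          h _ (U.starProjection_apply_mem x) _ (U.starProjection_apply_mem y)
      _ = ⟪x, T (U.starProjection y)⟫_𝕜 := by
          rw [U.inner_starProjection_left_eq_right, Submodule.starProjection_eq_self_iff.mpr (hTU _)]

variable [CompleteSpace F]

theorem isSymmetricOn_range_adjoint_iff (T : E →L[𝕜] E) (A : E →L[𝕜] F) :
    IsSymmetricOn T (LinearMap.range (adjoint A : F →ₗ[𝕜] E)) ↔
      IsSelfAdjoint (A ∘L T ∘L adjoint A) := by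
  rw [isSelfAdjoint_iff_isSymmetric, IsSymmetricOn]
  constructor
  · intro h a b
    simpa only [coe_coe, coe_comp, Function.comp_apply, adjoint_inner_left, adjoint_inner_right]
      using h _ ⟨a, rfl⟩ _ ⟨b, rfl⟩
  · rintro h _ ⟨a, rfl⟩ _ ⟨b, rfl⟩
    simpa only [coe_coe, coe_comp, Function.comp_apply, adjoint_inner_left, adjoint_inner_right]
      using h a b

end ContinuousLinearMap

theorem reduced_solution_selfAdjoint_iff_general
    {H K : Type*} [NormedAddCommGroup H] [InnerProductSpace ℂ H] [CompleteSpace H]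
    [NormedAddCommGroup K] [InnerProductSpace ℂ K] [CompleteSpace K]
    (A C : H →L[ℂ] K) (D : H →L[ℂ] H)
    (hD1 : A ∘L D = C)
    (hD2 : (LinearMap.range (D : H →ₗ[ℂ] H) : Set H) ⊆ closure (LinearMap.range (adjoint A : K →ₗ[ℂ] H) : Set H)) :
    IsSelfAdjoint (D ∘L ((LinearMap.range (adjoint A : K →ₗ[ℂ] H)).topologicalClosure.subtypeL ∘L
        Submodule.orthogonalProjectionOnto (LinearMap.range (adjoint A : K →ₗ[ℂ] H)).topologicalClosure)) ↔
      IsSelfAdjoint (C ∘L adjoint A) := by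
  set R := LinearMap.range (adjoint A : K →ₗ[ℂ] H)
  have hDR : LinearMap.range (D : H →ₗ[ℂ] H) ≤ R.topologicalClosure := by
    rw [← SetLike.coe_subset_coe, R.topologicalClosure_coe]
    exact hD2
  calc IsSelfAdjoint (D ∘L R.topologicalClosure.starProjection)
      ↔ IsSymmetricOn D R.topologicalClosure := isSelfAdjoint_comp_starProjection_iff _ hDR
    _ ↔ IsSymmetricOn D R := by rw [R.topologicalClosure_coe, isSymmetricOn_closure_iff]
    _ ↔ IsSelfAdjoint (A ∘L D ∘L adjoint A) := isSymmetricOn_range_adjoint_iff D A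
    _ ↔ IsSelfAdjoint (C ∘L adjoint A) := by rw [← comp_assoc, hD1]

theorem reduced_solution_selfAdjoint_iff
    {H K : Type*} [NormedAddCommGroup H] [InnerProductSpace ℂ H] [CompleteSpace H]
    [NormedAddCommGroup K] [InnerProductSpace ℂ K] [CompleteSpace K]
    (A C : H →L[ℂ] K) (D : H →L[ℂ] H)
    (hrange : (LinearMap.range (C : H →ₗ[ℂ] K) : Set K) ⊆ (LinearMap.range (A : H →ₗ[ℂ] K) : Set K))
    (hD1 : A ∘L D = C)
    (hD2 : (LinearMap.range (D : H →ₗ[ℂ] H) : Set H) ⊆ closure (LinearMap.range (adjoint A : K →ₗ[ℂ] H) : Set H)) :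
    IsSelfAdjoint (D ∘L ((LinearMap.range (adjoint A : K →ₗ[ℂ] H)).topologicalClosure.subtypeL ∘L
        Submodule.orthogonalProjectionOnto (LinearMap.range (adjoint A : K →ₗ[ℂ] H)).topologicalClosure)) ↔
      IsSelfAdjoint (C ∘L adjoint A) :=
  reduced_solution_selfAdjoint_iff_general A C D hD1 hD2
end

section
/- Let H, K be Hilbert spaces, A, C : H →L[ℂ] K with range C ⊆ range A, D the reduced solution of A X = C, and P the orthogonal projection onto closure(range A*). Then D ∘L P is a positive operator if and only if C ∘L A* is a positive operator. -/
/-!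
Since `A ∘ D = C`, `⟪C A† x, x⟫ = ⟪D (A† x), A† x⟫`, so `C A†` is positive iff the form
`z ↦ ⟪D z, z⟫` is nonnegative on `range A†`, equivalently (by continuity) on its closure `S`.
As `D` maps into `S` and `y - P y ⊥ S`, `⟪D (P y), y⟫ = ⟪D (P y), P y⟫`, so `D P` is positive
under exactly the same condition.
-/

open ContinuousLinearMap

open scoped ComplexOrder InnerProductSpace

namespace ContinuousLinearMap

section RCLike

variable {𝕜 E F : Type*} [RCLike 𝕜] [NormedAddCommGroup E] [InnerProductSpace 𝕜 E]
  [NormedAddCommGroup F] [InnerProductSpace 𝕜 F]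

theorem forall_mem_closure_inner_self_nonneg_iff (T : E →L[𝕜] E) (s : Set E) :
    (∀ z ∈ closure s, 0 ≤ ⟪T z, z⟫_𝕜) ↔ ∀ z ∈ s, 0 ≤ ⟪T z, z⟫_𝕜 :=
  ⟨fun h z hz => h z (subset_closure hz), fun h =>
    closure_minimal h (isClosed_le continuous_const (T.continuous.inner continuous_id))⟩

theorem inner_comp_adjoint_apply_self [CompleteSpace E] [CompleteSpace F]
    {A C : E →L[𝕜] F} {D : E →L[𝕜] E} (hAD : A ∘L D = C) (x : F) :
    ⟪(C ∘L adjoint A) x, x⟫_𝕜 = ⟪D (adjoint A x), adjoint A x⟫_𝕜 := by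
  rw [← hAD, comp_apply, comp_apply, adjoint_inner_right]

end RCLike

variable {E : Type*} [NormedAddCommGroup E] [InnerProductSpace ℂ E]

theorem isPositive_iff_forall_inner_self_nonneg (T : E →L[ℂ] E) :
    T.IsPositive ↔ ∀ x, 0 ≤ ⟪T x, x⟫_ℂ := by
  simp only [isPositive_iff_complex, Complex.nonneg_iff, Complex.ext_iff, RCLike.re_to_complex,
    Complex.ofReal_re, Complex.ofReal_im, true_and, eq_comm (a := (0 : ℝ)), and_comm]

theorem isPositive_comp_starProjection_iff (U : Submodule ℂ E) [U.HasOrthogonalProjection]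
    {T : E →L[ℂ] E} (hT : ∀ x ∈ U, T x ∈ U) :
    (T ∘L U.starProjection).IsPositive ↔ ∀ z ∈ U, 0 ≤ ⟪T z, z⟫_ℂ := by
  rw [isPositive_iff_forall_inner_self_nonneg]
  refine ⟨fun h z hz => ?_, fun h y => ?_⟩
  · simpa [Submodule.starProjection_eq_self_iff.mpr hz] using h z
  · have hPy := U.starProjection_apply_mem y
    have hproj : ⟪T (U.starProjection y), y⟫_ℂ = ⟪T (U.starProjection y), U.starProjection y⟫_ℂ := by
      rw [← U.inner_starProjection_left_eq_right, Submodule.starProjection_eq_self_iff.mpr (hT _ hPy)]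
    rw [comp_apply, hproj]
    exact h _ hPy

end ContinuousLinearMap

theorem reduced_solution_positive_iff_general
    {H K : Type*} [NormedAddCommGroup H] [InnerProductSpace ℂ H] [CompleteSpace H]
    [NormedAddCommGroup K] [InnerProductSpace ℂ K] [CompleteSpace K]
    (A C : H →L[ℂ] K) (D : H →L[ℂ] H)
    (hD1 : A ∘L D = C)
    (hD2 : (LinearMap.range (D : H →ₗ[ℂ] H) : Set H) ⊆ closure (LinearMap.range (adjoint A : K →ₗ[ℂ] H) : Set H)) :
    (D ∘L ((LinearMap.range (adjoint A : K →ₗ[ℂ] H)).topologicalClosure.subtypeL ∘L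
        Submodule.orthogonalProjectionOnto (LinearMap.range (adjoint A : K →ₗ[ℂ] H)).topologicalClosure)).IsPositive ↔
      (C ∘L adjoint A).IsPositive := by
  set S := (LinearMap.range (adjoint A : K →ₗ[ℂ] H)).topologicalClosure
  have hS : (S : Set H) = closure (Set.range (adjoint A)) := Submodule.topologicalClosure_coe _
  have hDS : ∀ x ∈ S, D x ∈ S := fun x _ => by
    rw [← SetLike.mem_coe, hS]
    exact hD2 (LinearMap.mem_range_self _ x)
  calc (D ∘L S.starProjection).IsPositive
      ↔ ∀ z ∈ closure (Set.range (adjoint A)), 0 ≤ ⟪D z, z⟫_ℂ := by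
        rw [isPositive_comp_starProjection_iff S hDS, ← hS]; rfl
    _ ↔ ∀ x, 0 ≤ ⟪D (adjoint A x), adjoint A x⟫_ℂ := by
        rw [forall_mem_closure_inner_self_nonneg_iff, Set.forall_mem_range]
    _ ↔ (C ∘L adjoint A).IsPositive := by
        simp only [isPositive_iff_forall_inner_self_nonneg, inner_comp_adjoint_apply_self hD1]

theorem reduced_solution_positive_iff
    {H K : Type*} [NormedAddCommGroup H] [InnerProductSpace ℂ H] [CompleteSpace H]
    [NormedAddCommGroup K] [InnerProductSpace ℂ K] [CompleteSpace K]
    (A C : H →L[ℂ] K) (D : H →L[ℂ] H)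
    (hrange : (LinearMap.range (C : H →ₗ[ℂ] K) : Set K) ⊆ (LinearMap.range (A : H →ₗ[ℂ] K) : Set K))
    (hD1 : A ∘L D = C)
    (hD2 : (LinearMap.range (D : H →ₗ[ℂ] H) : Set H) ⊆ closure (LinearMap.range (adjoint A : K →ₗ[ℂ] H) : Set H)) :
    (D ∘L ((LinearMap.range (adjoint A : K →ₗ[ℂ] H)).topologicalClosure.subtypeL ∘L
        Submodule.orthogonalProjectionOnto (LinearMap.range (adjoint A : K →ₗ[ℂ] H)).topologicalClosure)).IsPositive ↔
      (C ∘L adjoint A).IsPositive :=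
  reduced_solution_positive_iff_general A C D hD1 hD2
end

section
/- Let H, K be Hilbert spaces, A, C : H →L[ℂ] K with range C ⊆ range A, D the reduced solution of A X = C, and P the orthogonal projection onto closure(range A*). If C ∘L A* is self-adjoint and has closed range, then D ∘L P has closed range. -/
/-!
Put `S := D ∘L A†`. Since `D` maps into `closure (range A†) = (ker A)ᗮ`, the operators `S` and
`A ∘L S = C ∘L A†` have the same kernel. The latter has closed range, so by the open mapping
theorem it is bounded below on the orthogonal complement of its kernel; as
`‖A (S x)‖ ≤ ‖A‖ ‖S x‖`, so is `S`, whence `range S` is closed. Finally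
`range (D ∘L P) = D '' closure (range A†)` lies between `range S` and its closure.
-/

open ContinuousLinearMap

open scoped NNReal

theorem AntilipschitzWith.of_comp_lipschitzWith {α β γ : Type*} [PseudoEMetricSpace α]
    [PseudoEMetricSpace β] [PseudoEMetricSpace γ] {f : α → β} {g : β → γ} {Kgf Kg : ℝ≥0}
    (hgf : AntilipschitzWith Kgf (g ∘ f)) (hg : LipschitzWith Kg g) :
    AntilipschitzWith (Kgf * Kg) f := fun x y =>
  calc edist x y ≤ Kgf * edist (g (f x)) (g (f y)) := hgf x y
    _ ≤ Kgf * (Kg * edist (f x) (f y)) := by gcongr; exact hg _ _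
    _ = (Kgf * Kg : ℝ≥0) * edist (f x) (f y) := by rw [ENNReal.coe_mul, mul_assoc]

namespace ContinuousLinearMap

variable {𝕜 E F G : Type*} [RCLike 𝕜] [NormedAddCommGroup E] [InnerProductSpace 𝕜 E]
  [NormedAddCommGroup F] [NormedSpace 𝕜 F] [NormedAddCommGroup G] [NormedSpace 𝕜 G]

theorem ker_comp_eq_of_range_le_orthogonal_ker (A : E →L[𝕜] F) (D : G →L[𝕜] E)
    (h : D.range ≤ A.kerᗮ) : (A ∘L D).ker = D.ker := by
  refine le_antisymm (fun x hx => ?_) fun x hx => by simp_all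
  have : D x ∈ A.ker ⊓ A.kerᗮ := ⟨hx, h ⟨x, rfl⟩⟩
  simpa [Submodule.inf_orthogonal_eq_bot] using this

theorem injective_comp_subtypeL_orthogonal_ker (B : E →L[𝕜] F) :
    Function.Injective (B ∘L B.kerᗮ.subtypeL) := by
  refine (injective_iff_map_eq_zero _).2 fun v hv => ?_
  have : (v : E) ∈ B.ker ⊓ B.kerᗮ := ⟨hv, v.2⟩
  simpa [Submodule.inf_orthogonal_eq_bot] using this

variable [CompleteSpace E]

theorem range_comp_subtypeL_orthogonal_ker_of_ker_le {B : E →L[𝕜] F} {S : E →L[𝕜] G}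
    (h : B.ker ≤ S.ker) : (S ∘L B.kerᗮ.subtypeL).range = S.range := by
  refine le_antisymm (LinearMap.range_comp_le_range _ _) ?_
  rintro _ ⟨x, rfl⟩
  obtain ⟨k, hk, v, hv, rfl⟩ := B.ker.exists_add_mem_mem_orthogonal x
  exact ⟨⟨v, hv⟩, by simp [show S k = 0 from h hk]⟩

theorem isClosed_range_of_isClosed_range_comp [CompleteSpace G] (S : E →L[𝕜] F) (A : F →L[𝕜] G)
    (hker : (A ∘L S).ker ≤ S.ker) (hclosed : IsClosed ((A ∘L S).range : Set G)) :
    IsClosed (S.range : Set F) := by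
  set V := (A ∘L S).kerᗮ
  have hV : IsClosed (Set.range ((A ∘L S) ∘L V.subtypeL)) := by
    rwa [← coe_coe, ← LinearMap.coe_range, range_comp_subtypeL_orthogonal_ker_of_ker_le le_rfl]
  obtain ⟨c, hc⟩ := ((A ∘L S) ∘L V.subtypeL).antilipschitz_of_injective_of_isClosed_range
    (injective_comp_subtypeL_orthogonal_ker _) hV
  have hSV : AntilipschitzWith (c * ‖A‖₊) (S ∘L V.subtypeL) :=
    .of_comp_lipschitzWith (g := A) hc A.lipschitz
  rw [← range_comp_subtypeL_orthogonal_ker_of_ker_le hker, LinearMap.coe_range, coe_coe]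
  exact hSV.isClosed_range (S ∘L V.subtypeL).uniformContinuous

end ContinuousLinearMap

theorem Submodule.map_topologicalClosure_eq_of_isClosed {𝕜 E F : Type*} [NormedField 𝕜]
    [NormedAddCommGroup E] [NormedSpace 𝕜 E] [NormedAddCommGroup F] [NormedSpace 𝕜 F]
    (M : Submodule 𝕜 E) (D : E →L[𝕜] F)
    (h : IsClosed (M.map (D : E →ₗ[𝕜] F) : Set F)) :
    M.topologicalClosure.map (D : E →ₗ[𝕜] F) = M.map (D : E →ₗ[𝕜] F) :=
  le_antisymm ((M.topologicalClosure_map D).trans h.submodule_topologicalClosure_eq.le)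
    (Submodule.map_mono M.le_topologicalClosure)

theorem reduced_solution_closed_range_general
    {H K : Type*} [NormedAddCommGroup H] [InnerProductSpace ℂ H] [CompleteSpace H]
    [NormedAddCommGroup K] [InnerProductSpace ℂ K] [CompleteSpace K]
    (A C : H →L[ℂ] K) (D : H →L[ℂ] H)
    (hD1 : A ∘L D = C)
    (hD2 : (LinearMap.range (D : H →ₗ[ℂ] H) : Set H) ⊆ closure (LinearMap.range (adjoint A : K →ₗ[ℂ] H) : Set H))
    (hclosed : IsClosed (LinearMap.range (C ∘L adjoint A : K →ₗ[ℂ] K) : Set K)) :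
    IsClosed (LinearMap.range ((D ∘L ((LinearMap.range (adjoint A : K →ₗ[ℂ] H)).topologicalClosure.subtypeL ∘L
      Submodule.orthogonalProjectionOnto (LinearMap.range (adjoint A : K →ₗ[ℂ] H)).topologicalClosure) : H →ₗ[ℂ] H)) : Set H) := by
  have hS_range : (D ∘L adjoint A).range ≤ A.kerᗮ := by
    rw [A.orthogonal_ker]
    exact (LinearMap.range_comp_le_range _ _).trans hD2
  have hS_closed : IsClosed ((D ∘L adjoint A).range : Set H) := by
    refine isClosed_range_of_isClosed_range_comp _ A
      (ker_comp_eq_of_range_le_orthogonal_ker A _ hS_range).le ?_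
    rwa [← comp_assoc, hD1]
  rw [toLinearMap_comp, LinearMap.range_comp] at hS_closed
  change IsClosed ((D ∘L (adjoint A).range.topologicalClosure.starProjection).range : Set H)
  rwa [toLinearMap_comp, LinearMap.range_comp, Submodule.range_starProjection,
    Submodule.map_topologicalClosure_eq_of_isClosed _ _ hS_closed]

theorem reduced_solution_closed_range
    {H K : Type*} [NormedAddCommGroup H] [InnerProductSpace ℂ H] [CompleteSpace H]
    [NormedAddCommGroup K] [InnerProductSpace ℂ K] [CompleteSpace K]
    (A C : H →L[ℂ] K) (D : H →L[ℂ] H)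
    (hrange : (LinearMap.range (C : H →ₗ[ℂ] K) : Set K) ⊆ (LinearMap.range (A : H →ₗ[ℂ] K) : Set K))
    (hD1 : A ∘L D = C)
    (hD2 : (LinearMap.range (D : H →ₗ[ℂ] H) : Set H) ⊆ closure (LinearMap.range (adjoint A : K →ₗ[ℂ] H) : Set H))
    (hsa : IsSelfAdjoint (C ∘L adjoint A))
    (hclosed : IsClosed (LinearMap.range (C ∘L adjoint A : K →ₗ[ℂ] K) : Set K)) :
    IsClosed (LinearMap.range ((D ∘L ((LinearMap.range (adjoint A : K →ₗ[ℂ] H)).topologicalClosure.subtypeL ∘L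
      Submodule.orthogonalProjectionOnto (LinearMap.range (adjoint A : K →ₗ[ℂ] H)).topologicalClosure) : H →ₗ[ℂ] H)) : Set H) :=
  reduced_solution_closed_range_general A C D hD1 hD2 hclosed
end

section
/- Let H, K be Hilbert spaces and A, C : H →L[ℂ] K. If range C ⊆ range A and there exists t > 0 with C ∘L C* ≤ t • (C ∘L A*) in the Loewner order, then there exists a positive operator X : H →L[ℂ] H with A ∘L X = C. -/
/-!
Put `N = ker A`, so that `Nᗮ` is the closure of the range of `A†`. Positivity of
`t C A† - C C†` gives `‖C† y‖² ≤ t re ⟪C† y, A† y⟫`, hence `‖C† y‖ ≤ t ‖A† y‖`, so (Douglas)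
`C† = D A†` for a bounded `D` vanishing on `N`, and `A D† = C`. Self-adjointness of the majorant
gives `A C† = C A†`; by density, `A D = C` on `Nᗮ`, `D` is symmetric on `Nᗮ`, and
`‖D m‖² ≤ t re ⟪D m, m⟫` there. In the block form `D = [[D₁₁, 0], [D₂₁, 0]]` for `H = Nᗮ ⊕ N`,
this inequality makes `X = [[D₁₁, D₂₁†], [D₂₁, t]]` positive, and `A X = C` since `A` kills `N`.
-/

open ContinuousLinearMap
open scoped InnerProductSpace

theorem norm_le_mul_norm_of_sq_le_re_inner {𝕜 E : Type*} [RCLike 𝕜] [NormedAddCommGroup E]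
    [InnerProductSpace 𝕜 E] {a b : E} {t : ℝ} (ht : 0 ≤ t)
    (h : ‖a‖ ^ 2 ≤ t * RCLike.re ⟪a, b⟫_𝕜) : ‖a‖ ≤ t * ‖b‖ := by
  have hcs := mul_le_mul_of_nonneg_left (re_inner_le_norm (𝕜 := 𝕜) a b) ht
  by_contra! hlt
  have ha : 0 < ‖a‖ := (mul_nonneg ht (norm_nonneg b)).trans_lt hlt
  nlinarith [mul_lt_mul_of_pos_left hlt ha]

namespace ContinuousLinearMap

variable {𝕜 E : Type*} [RCLike 𝕜] [NormedAddCommGroup E] [InnerProductSpace 𝕜 E] [CompleteSpace E]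

theorem exists_comp_eq_and_eq_zero_of_norm_le {F G : Type*} [NormedAddCommGroup F]
    [NormedSpace 𝕜 F] [CompleteSpace F] [NormedAddCommGroup G] [NormedSpace 𝕜 G]
    {S : G →L[𝕜] E} {T : G →L[𝕜] F} (c : ℝ) (h : ∀ y, ‖T y‖ ≤ c * ‖S y‖) :
    ∃ D : E →L[𝕜] F, D ∘L S = T ∧ ∀ z ∈ S.rangeᗮ, D z = 0 := by
  set M := S.range.topologicalClosure
  have : CompleteSpace M := S.range.isClosed_topologicalClosure.completeSpace_coe
  have hSM : ∀ y, S y ∈ M := fun y ↦ S.range.le_topologicalClosure ⟨y, rfl⟩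
  let e : G →ₗ[𝕜] M := (S : G →ₗ[𝕜] E).codRestrict M hSM
  have he : DenseRange e := by
    rw [DenseRange, Topology.IsInducing.subtypeVal.dense_iff]
    intro x
    rw [← Set.range_comp]
    exact x.2
  refine ⟨(T : G →ₗ[𝕜] F).extendOfNorm e ∘L M.orthogonalProjectionOnto, ?_, fun z hz ↦ ?_⟩
  · ext y
    have : M.orthogonalProjectionOnto (S y) = e y :=
      Submodule.orthogonalProjectionOnto_mem_subspace_eq_self (K := M) ⟨S y, hSM y⟩
    simpa [this] using LinearMap.extendOfNorm_eq he ⟨c, h⟩ y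
  · rw [← Submodule.orthogonal_closure] at hz
    rw [comp_apply, Submodule.orthogonalProjectionOnto_apply_of_mem_orthogonal hz, map_zero]

section blockCompletion

variable (N : Submodule 𝕜 E) [N.HasOrthogonalProjection]

/-- With respect to `E = Nᗮ ⊕ N`, an operator `D` vanishing on `N` has block form
`[[D₁₁, 0], [D₂₁, 0]]`; its block completion is `[[D₁₁, D₂₁†], [D₂₁, t]]`. -/
noncomputable def blockCompletion (D : E →L[𝕜] E) (t : ℝ) : E →L[𝕜] E :=
  D + adjoint D ∘L N.starProjection + (t : 𝕜) • N.starProjection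

variable {N} {D : E →L[𝕜] E} {t : ℝ}

theorem inner_blockCompletion_apply (hD : ∀ z ∈ N, D z = 0) (u v : E) :
    ⟪blockCompletion N D t u, v⟫_𝕜 =
      ⟪D (Nᗮ.starProjection u), Nᗮ.starProjection v⟫_𝕜 +
      ⟪D (Nᗮ.starProjection u), N.starProjection v⟫_𝕜 +
      ⟪N.starProjection u, D (Nᗮ.starProjection v)⟫_𝕜 +
      t * ⟪N.starProjection u, N.starProjection v⟫_𝕜 := by
  have hDP : ∀ w, D w = D (Nᗮ.starProjection w) := fun w ↦ by
    conv_lhs => rw [← N.starProjection_add_starProjection_orthogonal w]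
    rw [map_add, hD _ (N.starProjection_apply_mem w), zero_add]
  have hQP : ⟪N.starProjection u, Nᗮ.starProjection v⟫_𝕜 = 0 :=
    Submodule.inner_right_of_mem_orthogonal (N.starProjection_apply_mem u)
      (Nᗮ.starProjection_apply_mem v)
  conv_lhs => rw [← N.starProjection_add_starProjection_orthogonal v]
  simp only [blockCompletion, add_apply, comp_apply, smul_apply, inner_add_left, inner_add_right,
    inner_smul_left, adjoint_inner_left, RCLike.conj_ofReal, hQP, hDP u,
    hD _ (N.starProjection_apply_mem v), inner_zero_right]
  ring

theorem isPositive_blockCompletion (ht : 0 < t) (hD : ∀ z ∈ N, D z = 0)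
    (hsymm : ∀ m ∈ Nᗮ, ∀ m' ∈ Nᗮ, ⟪D m, m'⟫_𝕜 = ⟪m, D m'⟫_𝕜)
    (hbound : ∀ m ∈ Nᗮ, ‖D m‖ ^ 2 ≤ t * RCLike.re ⟪D m, m⟫_𝕜) :
    (blockCompletion N D t).IsPositive := by
  refine ⟨fun u v ↦ ?_, fun u ↦ ?_⟩
  · rw [← inner_conj_symm u]
    simp only [coe_coe]
    rw [inner_blockCompletion_apply hD, inner_blockCompletion_apply hD,
      hsymm _ (Nᗮ.starProjection_apply_mem u) _ (Nᗮ.starProjection_apply_mem v)]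
    simp only [map_add, map_mul, inner_conj_symm, RCLike.conj_ofReal]
    ring
  · have hm := hbound _ (Nᗮ.starProjection_apply_mem u)
    rw [reApplyInnerSelf_apply, inner_blockCompletion_apply hD]
    set m := Nᗮ.starProjection u
    set q := N.starProjection u
    have hcross : -(‖D m‖ * ‖q‖) ≤ RCLike.re ⟪D m, q⟫_𝕜 :=
      neg_le.mp (by simpa [inner_neg_left] using re_inner_le_norm (𝕜 := 𝕜) (-D m) q)
    simp only [map_add, RCLike.re_ofReal_mul, inner_re_symm (𝕜 := 𝕜) q, inner_self_eq_norm_sq]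
    -- `t (re ⟪D m, m⟫ + 2 re ⟪D m, q⟫ + t ‖q‖²) ≥ (‖D m‖ - t ‖q‖)²`
    nlinarith [sq_nonneg (‖D m‖ - t * ‖q‖), mul_le_mul_of_nonneg_left hcross ht.le]

theorem comp_blockCompletion {F : Type*} [NormedAddCommGroup F] [InnerProductSpace 𝕜 F]
    {A C : E →L[𝕜] F} (hD : ∀ z ∈ A.ker, D z = 0) (hAD : Set.EqOn (A ∘L D) C A.kerᗮ)
    (hADadj : A ∘L adjoint D = C) :
    A ∘L blockCompletion A.ker D t = C := by
  ext u
  have hu := A.ker.starProjection_add_starProjection_orthogonal u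
  have hQ := A.ker.starProjection_apply_mem u
  have hAQ : A (A.ker.starProjection u) = 0 := hQ
  have hP := A.kerᗮ.starProjection_apply_mem u
  calc A (blockCompletion A.ker D t u)
      = A (D (A.kerᗮ.starProjection u)) + C (A.ker.starProjection u) := by
        conv_lhs => rw [← hu]
        simp [blockCompletion, hAQ, hD _ hQ, ← hADadj]
    _ = C u := by rw [← comp_apply, hAD hP, add_comm, ← map_add, hu]

end blockCompletion

variable {F : Type*} [NormedAddCommGroup F] [InnerProductSpace 𝕜 F] [CompleteSpace F]

theorem coe_orthogonal_ker (A : E →L[𝕜] F) :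
    (A.kerᗮ : Set E) = closure (Set.range (adjoint A)) := by
  rw [orthogonal_ker, Submodule.topologicalClosure_coe]
  rfl

theorem eqOn_orthogonal_ker_of_comp_adjoint_eq {G : Type*} [NormedAddCommGroup G]
    [NormedSpace 𝕜 G] {A : E →L[𝕜] F} {S T : E →L[𝕜] G} (h : S ∘L adjoint A = T ∘L adjoint A) :
    Set.EqOn S T A.kerᗮ := by
  rw [coe_orthogonal_ker]
  refine Set.EqOn.closure ?_ S.continuous T.continuous
  rintro _ ⟨y, rfl⟩
  exact congr($h y)

theorem comp_adjoint_eq_of_isPositive {A C : E →L[𝕜] F} {t : ℝ} (ht : t ≠ 0)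
    (h : ((t : 𝕜) • (C ∘L adjoint A) - C ∘L adjoint C).IsPositive) :
    A ∘L adjoint C = C ∘L adjoint A := by
  have hsa := h.isSelfAdjoint.star_eq
  simp only [star_sub, star_smul, RCLike.star_def, RCLike.conj_ofReal, star_eq_adjoint,
    adjoint_comp, adjoint_adjoint, sub_left_inj] at hsa
  exact smul_right_injective _ (RCLike.ofReal_ne_zero.mpr ht) hsa

theorem sq_norm_adjoint_apply_le {A C : E →L[𝕜] F} {t : ℝ}
    (h : ((t : 𝕜) • (C ∘L adjoint A) - C ∘L adjoint C).IsPositive) (y : F) :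
    ‖adjoint C y‖ ^ 2 ≤ t * RCLike.re ⟪adjoint C y, adjoint A y⟫_𝕜 := by
  have := h.re_inner_nonneg_left y
  rw [sub_apply, inner_sub_left, map_sub, smul_apply, comp_apply, comp_apply, inner_smul_left,
    RCLike.conj_ofReal, RCLike.re_ofReal_mul, ← adjoint_inner_right C, ← adjoint_inner_right C,
    inner_self_eq_norm_sq, inner_re_symm (𝕜 := 𝕜)] at this
  linarith

variable {A C : E →L[𝕜] F} {D : E →L[𝕜] E}

theorem inner_apply_left_eq_right_of_mem_orthogonal_ker (hDA : D ∘L adjoint A = adjoint C)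
    (hAD : Set.EqOn (A ∘L D) C A.kerᗮ) :
    ∀ m ∈ A.kerᗮ, ∀ m' ∈ A.kerᗮ, ⟪D m, m'⟫_𝕜 = ⟪m, D m'⟫_𝕜 := by
  intro m hm
  refine eqOn_orthogonal_ker_of_comp_adjoint_eq (S := innerSL 𝕜 (D m)) (T := innerSL 𝕜 m ∘L D) ?_
  ext y
  simp only [comp_apply, innerSL_apply_apply]
  rw [adjoint_inner_right, ← comp_apply A D, hAD hm, ← adjoint_inner_right, ← hDA, comp_apply]

theorem sq_norm_apply_le_of_mem_orthogonal_ker {t : ℝ}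
    (h : ((t : 𝕜) • (C ∘L adjoint A) - C ∘L adjoint C).IsPositive)
    (hDA : D ∘L adjoint A = adjoint C) :
    ∀ m ∈ A.kerᗮ, ‖D m‖ ^ 2 ≤ t * RCLike.re ⟪D m, m⟫_𝕜 := by
  intro m hm
  rw [← SetLike.mem_coe, coe_orthogonal_ker] at hm
  have hclosed : IsClosed {x : E | ‖D x‖ ^ 2 ≤ t * RCLike.re ⟪D x, x⟫_𝕜} :=
    isClosed_le (by fun_prop) (by fun_prop)
  refine closure_minimal ?_ hclosed hm
  rintro _ ⟨y, rfl⟩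
  simpa only [Set.mem_ofPred_eq, ← hDA, comp_apply] using sq_norm_adjoint_apply_le h y

end ContinuousLinearMap

theorem positive_solution_sufficient_general
    {H K : Type*} [NormedAddCommGroup H] [InnerProductSpace ℂ H] [CompleteSpace H]
    [NormedAddCommGroup K] [InnerProductSpace ℂ K] [CompleteSpace K]
    (A C : H →L[ℂ] K) (t : ℝ) (ht : 0 < t)
    (hmaj : (t • (C ∘L adjoint A) - C ∘L adjoint C).IsPositive) :
    ∃ X : H →L[ℂ] H, X.IsPositive ∧ A ∘L X = C := by
  rw [RCLike.real_smul_eq_coe_smul (K := ℂ)] at hmaj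
  obtain ⟨D, hDA, hD⟩ := exists_comp_eq_and_eq_zero_of_norm_le t fun y ↦
    norm_le_mul_norm_of_sq_le_re_inner ht.le (sq_norm_adjoint_apply_le hmaj y)
  rw [orthogonal_range, adjoint_adjoint] at hD
  have hAD : Set.EqOn (A ∘L D) C A.kerᗮ := eqOn_orthogonal_ker_of_comp_adjoint_eq <| by
    rw [comp_assoc, hDA, comp_adjoint_eq_of_isPositive ht.ne' hmaj]
  have hADadj : A ∘L adjoint D = C := by
    rw [← adjoint_adjoint A, ← adjoint_comp, hDA, adjoint_adjoint]
  exact ⟨blockCompletion A.ker D t,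
    isPositive_blockCompletion ht hD (inner_apply_left_eq_right_of_mem_orthogonal_ker hDA hAD)
      (sq_norm_apply_le_of_mem_orthogonal_ker hmaj hDA),
    comp_blockCompletion hD hAD hADadj⟩

theorem positive_solution_sufficient
    {H K : Type*} [NormedAddCommGroup H] [InnerProductSpace ℂ H] [CompleteSpace H]
    [NormedAddCommGroup K] [InnerProductSpace ℂ K] [CompleteSpace K]
    (A C : H →L[ℂ] K) (t : ℝ) (ht : 0 < t)
    (hrange : (LinearMap.range (C : H →ₗ[ℂ] K) : Set K) ⊆ (LinearMap.range (A : H →ₗ[ℂ] K) : Set K))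
    (hmaj : (t • (C ∘L adjoint A) - C ∘L adjoint C).IsPositive) :
    ∃ X : H →L[ℂ] H, X.IsPositive ∧ A ∘L X = C :=
  positive_solution_sufficient_general A C t ht hmaj
end

section
/- Let K be a Hilbert space, and let T = ![![a, b], ![b*, c]] be a 2×2 operator matrix on H ⊕ H which is self-adjoint, where a : H →L[ℂ] H is positive with closed range and Moore–Penrose inverse a†. Then T is positive if and only if b = a ∘L a† ∘L b and c - b* ∘L a† ∘L b is positive. -/
/-!
Write `p = a a†`, a self-adjoint idempotent with `a p = a`. If `T ≥ 0`, then for `q` in the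
kernel of `a` the form `⟪T (r q, y), (r q, y)⟫` is affine in `r : ℝ` and bounded below, so
`re ⟪b y, q⟫ = 0`; taking `q = (1 - p) b y` gives `‖(1 - p) b y‖² = 0`, i.e. `b = p b`.
Given `b = p b`, the vector `w = a† b y` satisfies `a w = b y`, and completing the square gives
`re ⟪T (x, y), (x, y)⟫ = re ⟪a (x + w), x + w⟫ + re ⟪S y, y⟫` for the Schur complement
`S = c - b* a† b`; both directions of the criterion follow from this identity.
-/

open ContinuousLinearMap RCLike
open scoped InnerProductSpace

section StarSemigroup

variable {R : Type*} [Semigroup R] [StarMul R] {a d : R}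

theorem IsSelfAdjoint.mul_mul_eq_self_of_mul_mul_eq (ha : IsSelfAdjoint a) (h : a * d * a = a)
    (had : IsSelfAdjoint (a * d)) : a * (a * d) = a := by
  calc a * (a * d) = star a * star (a * d) := by rw [ha.star_eq, had.star_eq]
    _ = a := by rw [← star_mul, h, ha.star_eq]

theorem isStarProjection_mul_of_mul_mul_eq (h : a * d * a = a) (had : IsSelfAdjoint (a * d)) :
    IsStarProjection (a * d) where
  isIdempotentElem := by rw [IsIdempotentElem, ← mul_assoc, h]
  isSelfAdjoint := had

/-- Substituting `b = a d b` in the left factor turns `d` into `star d`. -/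
theorem isSelfAdjoint_star_mul_mul_of_mul_mul_eq {b : R} (ha : IsSelfAdjoint a)
    (h : a * d * b = b) : IsSelfAdjoint (star b * d * b) := by
  have hb : star b = star b * star d * a := by
    conv_lhs => rw [← h]
    rw [star_mul, star_mul, ha.star_eq, mul_assoc]
  rw [IsSelfAdjoint, star_mul, star_mul, star_star]
  nth_rw 2 [hb]
  rw [mul_assoc, mul_assoc, mul_assoc, ← mul_assoc a, h]

end StarSemigroup

theorem eq_zero_of_forall_nonneg_mul_add {s C : ℝ} (h : ∀ r : ℝ, 0 ≤ r * s + C) : s = 0 := by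
  by_contra hs
  have := h (-(C + 1) / s)
  field_simp at this
  linarith

namespace ContinuousLinearMap

variable {𝕜 E : Type*} [RCLike 𝕜] [NormedAddCommGroup E] [InnerProductSpace 𝕜 E]
  [CompleteSpace E]

theorem IsStarProjection.norm_apply_sq {e : E →L[𝕜] E} (he : IsStarProjection e) (v : E) :
    ‖e v‖ ^ 2 = re ⟪v, e v⟫_𝕜 := by
  rw [@norm_sq_eq_re_inner 𝕜, ← adjoint_inner_right, he.isSelfAdjoint.adjoint_eq,
    ← mul_apply_eq_comp, he.isIdempotentElem.eq]

/-- `re ⟪T (x, y), (x, y)⟫` for the block operator `T (x, y) = (a x + b y, b† x + c y)`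
on `E × E`. -/
noncomputable def blockReApplyInnerSelf (a b c : E →L[𝕜] E) (x y : E) : ℝ :=
  re (⟪a x + b y, x⟫_𝕜 + ⟪adjoint b x + c y, y⟫_𝕜)

theorem blockReApplyInnerSelf_eq (a b c : E →L[𝕜] E) (x y : E) :
    blockReApplyInnerSelf a b c x y = re ⟪a x, x⟫_𝕜 + 2 * re ⟪b y, x⟫_𝕜 + re ⟪c y, y⟫_𝕜 := by
  rw [blockReApplyInnerSelf, inner_add_left, inner_add_left, adjoint_inner_left]
  simp only [map_add]
  rw [inner_re_symm x (b y)]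
  ring

variable {a b c : E →L[𝕜] E}

theorem re_inner_eq_zero_of_blockReApplyInnerSelf_nonneg
    (hT : ∀ x y, 0 ≤ blockReApplyInnerSelf a b c x y) {q : E} (hq : a q = 0) (y : E) :
    re ⟪b y, q⟫_𝕜 = 0 := by
  refine eq_zero_of_forall_nonneg_mul_add (C := re ⟪c y, y⟫_𝕜) fun r => ?_
  have h := hT (((r / 2 : ℝ) : 𝕜) • q) y
  rw [blockReApplyInnerSelf_eq, map_smul, hq, smul_zero, inner_zero_left, map_zero,
    inner_smul_right, re_ofReal_mul] at h
  linarith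

theorem comp_comp_eq_of_blockReApplyInnerSelf_nonneg {ad : E →L[𝕜] E} (ha : IsSelfAdjoint a)
    (h₁ : a ∘L ad ∘L a = a) (h₃ : IsSelfAdjoint (a ∘L ad))
    (hT : ∀ x y, 0 ≤ blockReApplyInnerSelf a b c x y) :
    a ∘L ad ∘L b = b := by
  ext y
  set e : E →L[𝕜] E := 1 - a * ad
  have he : IsStarProjection e := (isStarProjection_mul_of_mul_mul_eq h₁ h₃).one_sub
  have hae : a * e = 0 := by
    rw [mul_sub, mul_one, ha.mul_mul_eq_self_of_mul_mul_eq h₁ h₃, sub_self]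
  have hq : a (e (b y)) = 0 := by rw [← mul_apply_eq_comp, hae, zero_apply]
  have hey : e (b y) = 0 := by
    rw [← norm_eq_zero, ← sq_eq_zero_iff, he.norm_apply_sq,
      re_inner_eq_zero_of_blockReApplyInnerSelf_nonneg hT hq]
  exact (sub_eq_zero.mp hey).symm

theorem blockReApplyInnerSelf_eq_add_schur {ad : E →L[𝕜] E} (ha : IsSelfAdjoint a)
    (hb : a ∘L ad ∘L b = b) (x y : E) :
    blockReApplyInnerSelf a b c x y =
      re ⟪a (x + ad (b y)), x + ad (b y)⟫_𝕜 + re ⟪(c - adjoint b ∘L ad ∘L b) y, y⟫_𝕜 := by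
  have hw : a (ad (b y)) = b y := congr($hb y)
  rw [blockReApplyInnerSelf_eq, sub_apply, comp_apply, comp_apply, inner_sub_left,
    adjoint_inner_left, map_add, hw, inner_add_left, inner_add_right, inner_add_right,
    ← adjoint_inner_right a x (ad (b y)), ha.adjoint_eq, hw]
  simp only [map_add, map_sub]
  rw [inner_re_symm x (b y), inner_re_symm (ad (b y)) (b y)]
  ring

end ContinuousLinearMap

theorem block_matrix_positivity_criterion_general
    {H : Type*} [NormedAddCommGroup H] [InnerProductSpace ℂ H] [CompleteSpace H]
    (a b c ad : H →L[ℂ] H)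
    (ha : a.IsPositive)
    (hc : IsSelfAdjoint c)
    (mp1 : a ∘L ad ∘L a = a)
    (mp3 : IsSelfAdjoint (a ∘L ad)) :
    (∀ x y : H, 0 ≤ (⟪a x + b y, x⟫_ℂ + ⟪(adjoint b) x + c y, y⟫_ℂ).re) ↔
      (b = a ∘L ad ∘L b ∧ (c - adjoint b ∘L ad ∘L b).IsPositive) := by
  have ha' := ha.isSelfAdjoint
  constructor
  · intro hT
    have hb := comp_comp_eq_of_blockReApplyInnerSelf_nonneg ha' mp1 mp3 hT
    refine ⟨hb.symm, isPositive_def'.mpr ⟨hc.sub ?_, fun y => ?_⟩⟩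
    · exact isSelfAdjoint_star_mul_mul_of_mul_mul_eq ha' hb
    · have h : 0 ≤ blockReApplyInnerSelf a b c (-ad (b y)) y := hT _ _
      rwa [blockReApplyInnerSelf_eq_add_schur ha' hb, neg_add_cancel, inner_zero_right,
        map_zero, zero_add] at h
  · rintro ⟨hb, hS⟩ x y
    show 0 ≤ blockReApplyInnerSelf a b c x y
    rw [blockReApplyInnerSelf_eq_add_schur ha' hb.symm]
    exact add_nonneg (ha.re_inner_nonneg_left _) (hS.re_inner_nonneg_left y)

/-- Xu–Sheng criterion for positivity of the 2×2 Hermitian operator block matrix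
`T = ![![a, b], ![b*, c]]` acting on `H ⊕ H` by `T (x, y) = (a x + b y, b* x + c y)`,
where the `(1,1)`-block `a` is positive with closed range and Moore–Penrose inverse `ad`.
Positivity of `T` is expressed via its quadratic form. -/
theorem block_matrix_positivity_criterion
    {H : Type*} [NormedAddCommGroup H] [InnerProductSpace ℂ H] [CompleteSpace H]
    (a b c ad : H →L[ℂ] H)
    (ha : a.IsPositive) (hclosed : IsClosed (LinearMap.range (a : H →ₗ[ℂ] H) : Set H))
    (hc : IsSelfAdjoint c)
    (mp1 : a ∘L ad ∘L a = a) (mp2 : ad ∘L a ∘L ad = ad)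
    (mp3 : IsSelfAdjoint (a ∘L ad)) (mp4 : IsSelfAdjoint (ad ∘L a)) :
    (∀ x y : H, 0 ≤ (⟪a x + b y, x⟫_ℂ + ⟪(adjoint b) x + c y, y⟫_ℂ).re) ↔
      (b = a ∘L ad ∘L b ∧ (c - adjoint b ∘L ad ∘L b).IsPositive) :=
  block_matrix_positivity_criterion_general a b c ad ha hc mp1 mp3
end

section
/- Let A = ![![1,0,0],![0,1,0],![0,0,0]] and C = ![![1,0,0],![0,0,1],![0,0,0]] be 3×3 complex matrices. Then range C = range A, C * Aᴴ is positive semidefinite, but there is no positive semidefinite 3×3 complex matrix X with A * X = C. -/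
open scoped ComplexOrder

/-! `C` is `A` with its last two columns swapped, so both have the column space `span {e₀, e₁}`,
and `C Aᴴ = diag (1, 0, 0)`. But `A X = C` forces the second row of `X` to be `(0, 0, 1)`:
a positive semidefinite `X` with a vanishing diagonal entry `X₁₁` has a vanishing row. -/

theorem Matrix.range_mulVecLin_submatrix_id_of_surjective {R m n n' : Type*} [CommSemiring R]
    [Fintype n] [Fintype n'] (M : Matrix m n R) {σ : n' → n} (hσ : Function.Surjective σ) :
    LinearMap.range (M.submatrix id σ).mulVecLin = LinearMap.range M.mulVecLin := by
  rw [Matrix.range_mulVecLin, Matrix.range_mulVecLin]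
  congr 1
  exact hσ.range_comp M.col

theorem Matrix.PosSemidef.apply_eq_zero_of_diag_eq_zero {𝕜 n : Type*} [RCLike 𝕜] [Fintype n]
    {X : Matrix n n 𝕜} (hX : X.PosSemidef) {i : n} (hi : X i i = 0) (j : n) : X i j = 0 := by
  classical
  have hcol : X.mulVec (Pi.single i 1) = 0 :=
    (hX.dotProduct_mulVec_zero_iff (Pi.single i 1)).mp
      (by simpa [Matrix.mulVec_single_one] using hi)
  have hji : X j i = 0 := by simpa [Matrix.mulVec_single_one] using congr_fun hcol j
  rw [← hX.isHermitian.apply i j, hji, star_zero]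

theorem counterexample_no_positive_solution :
    let A : Matrix (Fin 3) (Fin 3) ℂ := !![1, 0, 0; 0, 1, 0; 0, 0, 0]
    let C : Matrix (Fin 3) (Fin 3) ℂ := !![1, 0, 0; 0, 0, 1; 0, 0, 0]
    LinearMap.range C.mulVecLin = LinearMap.range A.mulVecLin ∧
      (C * A.conjTranspose).PosSemidef ∧
      ¬ ∃ X : Matrix (Fin 3) (Fin 3) ℂ, X.PosSemidef ∧ A * X = C := by
  intro A C
  refine ⟨?_, ?_, ?_⟩
  · have hC : C = A.submatrix id (Equiv.swap 1 2) := by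
      ext i j; fin_cases i <;> fin_cases j <;> rfl
    rw [hC]
    exact A.range_mulVecLin_submatrix_id_of_surjective (Equiv.swap 1 2).surjective
  · have hCA : C * A.conjTranspose = Matrix.diagonal ![1, 0, 0] := by
      ext i j
      fin_cases i <;> fin_cases j <;> simp [A, C, Matrix.mul_apply, Fin.sum_univ_three]
    rw [hCA]
    refine Matrix.PosSemidef.diagonal fun i => ?_
    fin_cases i <;> simp
  · rintro ⟨X, hX, hAX⟩
    have hX₁₁ : X 1 1 = 0 := by
      simpa [A, C, Matrix.mul_apply, Fin.sum_univ_three] using congr_fun₂ hAX 1 1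
    have hX₁₂ : X 1 2 = 1 := by
      simpa [A, C, Matrix.mul_apply, Fin.sum_univ_three] using congr_fun₂ hAX 1 2
    simpa [hX₁₂] using hX.apply_eq_zero_of_diag_eq_zero hX₁₁ 2
end

section
/- For t ∈ (0, 1], let P(t) = ![![1,0],![0,0]] and Q(t) = ![![c^2, s c],![s c, s^2]] where c = cos(π t / 2) and s = sin(π t / 2). Then P(t) + Q(t) is positive definite (invertible), and its positive square root is ![![α, β],![β, γ]] where α = (1/2)(2 - s)(√(1+c) + √(1-c)), β = (1/2) s (√(1+c) - √(1-c)), γ = (1/2) s (√(1+c) + √(1-c)). -/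
/-!
By Cayley–Hamilton, a `2 × 2` matrix `M` with `det M = δ ^ 2` satisfies
`(M + δ) ^ 2 = (tr M + 2 δ) M`, so `(M + δ) / √(tr M + 2 δ)` is a square root of `M`; for `M`
positive definite and `δ ≥ 0` it is positive definite too. Here `M = P + Q` has trace `2` and
determinant `s ^ 2`, and `√(2 + 2 s) = √(1 + c) + √(1 - c)` because `√(1 + c) √(1 - c) = s`.
Dividing `M + s` by this number gives the stated matrix.
-/

open Real

namespace Matrix

theorem mul_self_eq_trace_smul_sub_det_smul_one {R : Type*} [CommRing R]
    (M : Matrix (Fin 2) (Fin 2) R) : M * M = M.trace • M - M.det • 1 := by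
  ext i j
  fin_cases i <;> fin_cases j <;> simp [mul_apply, trace_fin_two, det_fin_two] <;> ring

theorem mul_self_add_smul_one_of_det_eq_sq {R : Type*} [CommRing R]
    (M : Matrix (Fin 2) (Fin 2) R) {δ : R} (hdet : M.det = δ ^ 2) :
    (M + δ • 1) * (M + δ • 1) = (M.trace + 2 * δ) • M := by
  simp only [add_mul, mul_add, smul_mul_assoc, mul_smul_comm, one_mul, mul_one,
    mul_self_eq_trace_smul_sub_det_smul_one, hdet]
  module

theorem mul_self_inv_smul_add_smul_one_eq {K : Type*} [Field K]
    (M : Matrix (Fin 2) (Fin 2) K) {δ k : K} (hdet : M.det = δ ^ 2)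
    (hk : k ^ 2 = M.trace + 2 * δ) (hk0 : k ≠ 0) :
    (k⁻¹ • (M + δ • 1)) * (k⁻¹ • (M + δ • 1)) = M := by
  rw [smul_mul_smul_comm, mul_self_add_smul_one_of_det_eq_sq M hdet, ← hk, smul_smul, ← sq,
    inv_pow, inv_mul_cancel₀ (pow_ne_zero 2 hk0), one_smul]

theorem posDef_fin_two_of {a b d : ℝ} (ha : 0 < a) (hdet : 0 < a * d - b ^ 2) :
    (!![a, b; b, d]).PosDef := by
  refine PosDef.of_dotProduct_mulVec_pos ?_ fun x hx => ?_
  · ext i j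
    fin_cases i <;> fin_cases j <;> simp
  · simp only [dotProduct, Pi.star_apply, star_trivial, mulVec, of_apply, cons_val',
      cons_val_fin_one, Fin.sum_univ_two, cons_val_zero, cons_val_one]
    have hsq : a * (x 0 * (a * x 0 + b * x 1) + x 1 * (b * x 0 + d * x 1)) =
        (a * x 0 + b * x 1) ^ 2 + (a * d - b ^ 2) * x 1 ^ 2 := by ring
    refine pos_of_mul_pos_right (hsq ▸ ?_) ha.le
    rcases eq_or_ne (x 1) 0 with h1 | h1
    · have h0 : x 0 ≠ 0 := fun h0 => hx (funext fun i => by fin_cases i <;> simp [h0, h1])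
      simpa [h1] using pow_two_pos_of_ne_zero (mul_ne_zero ha.ne' h0)
    · exact add_pos_of_nonneg_of_pos (sq_nonneg _) (mul_pos hdet (pow_two_pos_of_ne_zero h1))

end Matrix

theorem Real.sqrt_one_add_cos_mul_sqrt_one_sub_cos {θ : ℝ} (h : 0 ≤ sin θ) :
    √(1 + cos θ) * √(1 - cos θ) = sin θ := by
  rw [← sqrt_mul (by linarith [neg_one_le_cos θ]), ← sqrt_sq h, sin_sq]
  ring_nf

open Matrix in
theorem sqrt_of_sum_of_projections (t : ℝ) (ht : t ∈ Set.Ioc (0 : ℝ) 1) :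
    let c : ℝ := Real.cos (π * t / 2)
    let s : ℝ := Real.sin (π * t / 2)
    let P : Matrix (Fin 2) (Fin 2) ℝ := !![1, 0; 0, 0]
    let Q : Matrix (Fin 2) (Fin 2) ℝ := !![c ^ 2, s * c; s * c, s ^ 2]
    let α : ℝ := (1 / 2) * (2 - s) * (Real.sqrt (1 + c) + Real.sqrt (1 - c))
    let β : ℝ := (1 / 2) * s * (Real.sqrt (1 + c) - Real.sqrt (1 - c))
    let γ : ℝ := (1 / 2) * s * (Real.sqrt (1 + c) + Real.sqrt (1 - c))
    let R : Matrix (Fin 2) (Fin 2) ℝ := !![α, β; β, γ]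
    (P + Q).PosDef ∧ R.PosSemidef ∧ R * R = P + Q := by
  intro c s P Q α β γ R
  have hs : 0 < s := sin_pos_of_pos_of_lt_pi (by have := ht.1; positivity)
    (by nlinarith [ht.2, pi_pos])
  have hsc : s ^ 2 + c ^ 2 = 1 := sin_sq_add_cos_sq _
  have ha : √(1 + c) ^ 2 = 1 + c := sq_sqrt (by linarith [neg_one_le_cos (π * t / 2)])
  have hb : √(1 - c) ^ 2 = 1 - c := sq_sqrt (by linarith [cos_le_one (π * t / 2)])
  have hab : √(1 + c) * √(1 - c) = s := sqrt_one_add_cos_mul_sqrt_one_sub_cos hs.le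
  set k := √(1 + c) + √(1 - c)
  have hk : k ^ 2 = 2 + 2 * s := by linear_combination ha + hb + 2 * hab
  have hk0 : 0 < k := by nlinarith [show 0 ≤ k by positivity]
  have hM : P + Q = !![1 + c ^ 2, s * c; s * c, s ^ 2] := by
    ext i j; fin_cases i <;> fin_cases j <;> simp [P, Q]
  have hMpd : (P + Q).PosDef := hM ▸ posDef_fin_two_of (by positivity) (by ring_nf; positivity)
  have hdet : (P + Q).det = s ^ 2 := by rw [hM, det_fin_two_of]; ring
  have htr : (P + Q).trace = 2 := by rw [hM, trace_fin_two_of]; linear_combination hsc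
  have hα : k * α = 1 + c ^ 2 + s := by linear_combination (2 - s) / 2 * hk - hsc
  have hβ : k * β = s * c := by linear_combination s / 2 * ha - s / 2 * hb
  have hγ : k * γ = s ^ 2 + s := by linear_combination s / 2 * hk
  have hR : R = k⁻¹ • (P + Q + s • 1) := by
    rw [hM, eq_inv_smul_iff₀ hk0.ne']
    ext i j; fin_cases i <;> fin_cases j <;> simp [R, hα, hβ, hγ]
  refine ⟨hMpd, ?_, ?_⟩
  · rw [hR]
    exact ((hMpd.add_posSemidef (PosSemidef.one.smul hs.le)).smul (inv_pos.2 hk0)).posSemidef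
  · rw [hR]
    exact mul_self_inv_smul_add_smul_one_eq _ hdet (by rw [htr, hk]) hk0.ne'
end
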